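/- arXiv:math/0611257 — 3 statements merged into one kernel-verified Lean document; each statement's English description precedes it below -/
import Mathlib

section
/- Let (Ω, F, P) be a probability space with a filtration F_0 ⊆ F_1 ⊆ … ⊆ F_{K+1} ⊆ F, and for l = 0,…,K let L¹_l and L²_l be nonnegative integrable random variables that are F_{l+1}-measurable and satisfy E(L¹_l | F_l) = 1 and E(L²_l | F_l) = 1 almost surely. Then E[∏_{l=0}^{K} √(L¹_l L²_l)] ≥ ∏_{l=0}^{K} (1 − (1/2) ess sup E[(√(L¹_l) − √(L²_l))² | F_l]). -/
/-!
Write `gₗ = √(L¹ₗ L²ₗ)`. Since `(√L¹ₗ - √L²ₗ)² = L¹ₗ + L²ₗ - 2 gₗ`, we get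
`E[(√L¹ₗ - √L²ₗ)² | Fₗ] = 2 - 2 E[gₗ | Fₗ]`, so `cₗ ≤ E[gₗ | Fₗ] ≤ 1` a.s., where `cₗ` is the
`l`-th factor on the left. Pulling the `Fₙ`-measurable product `∏_{l<n} gₗ` out of the conditional
expectation given `Fₙ` yields `cₙ E[∏_{l<n} gₗ] ≤ E[∏_{l≤n} gₗ] ≤ E[∏_{l<n} gₗ]`, and induction on
`n` concludes. The induction runs on lower Lebesgue integrals, so no integrability of the partial
products is needed; the upper bound makes the final integral finite.
-/

open MeasureTheory Real
open scoped ENNReal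

theorem Real.sq_sqrt_sub_sqrt {x y : ℝ} (hx : 0 ≤ x) (hy : 0 ≤ y) :
    (√x - √y) ^ 2 = x + y - 2 * √(x * y) := by
  rw [sub_sq, sq_sqrt hx, sq_sqrt hy, sqrt_mul hx]
  ring

namespace MeasureTheory

variable {Ω : Type*}

theorem measurable_prod_range_of_adapted {M : Type*} [CommMonoid M] [MeasurableSpace M]
    [MeasurableMul₂ M] {F : ℕ → MeasurableSpace Ω} {G : ℕ → Ω → M} {n : ℕ}
    (hF : ∀ l < n, F l ≤ F (l + 1)) (hG : ∀ l < n, Measurable[F (l + 1)] (G l)) :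
    Measurable[F n] fun ω => ∏ l ∈ Finset.range n, G l ω := by
  induction n with
  | zero => simp only [Finset.range_zero, Finset.prod_empty]; exact measurable_const
  | succ n ih =>
    simp only [Finset.prod_range_succ]
    have ih' := ih (fun l hl => hF l (by omega)) (fun l hl => hG l (by omega))
    exact (ih'.mono (hF n n.lt_succ_self) le_rfl).mul (hG n n.lt_succ_self)

variable {m : MeasurableSpace Ω} [mΩ : MeasurableSpace Ω] {P : Measure Ω}

theorem lintegral_mul_condLExp (hm : m ≤ mΩ) [SigmaFinite (P.trim hm)] {f Y : Ω → ℝ≥0∞}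
    (hf : Measurable[m] f) (hY : AEMeasurable Y P) :
    ∫⁻ ω, f ω * Y ω ∂P = ∫⁻ ω, f ω * P⁻[Y|m] ω ∂P := by
  refine Measurable.ennreal_induction (motive := fun f =>
    ∫⁻ ω, f ω * Y ω ∂P = ∫⁻ ω, f ω * P⁻[Y|m] ω ∂P) ?indicator ?add ?iSup hf
  case indicator =>
    intro c s hs
    simp only [← Set.indicator_mul_left, lintegral_indicator (hm s hs)]
    rw [lintegral_const_mul'' c hY.restrict, lintegral_const_mul c (measurable_condLExp' m P Y),
      setLIntegral_condLExp hm P Y hs]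
  case add =>
    intro f g _ hf hg ihf ihg
    replace hf := hf.mono hm le_rfl
    simp only [Pi.add_apply, add_mul]
    rw [lintegral_add_left' (by fun_prop), lintegral_add_left (by fun_prop), ihf, ihg]
  case iSup =>
    intro f hf hmono ihf
    replace hf := fun n => (hf n).mono hm le_rfl
    have hmono' : ∀ Z : Ω → ℝ≥0∞, ∀ᵐ ω ∂P, Monotone fun n => f n ω * Z ω :=
      fun Z => ae_of_all _ fun ω _ _ hab => mul_le_mul_left (hmono hab ω) _
    simp only [ENNReal.iSup_mul]
    rw [lintegral_iSup' (by fun_prop) (hmono' Y), lintegral_iSup' (by fun_prop) (hmono' _)]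
    simp only [ihf]

theorem mul_lintegral_le_lintegral_mul (hm : m ≤ mΩ) [SigmaFinite (P.trim hm)]
    {f Y : Ω → ℝ≥0∞} (hf : Measurable[m] f) (hY : AEMeasurable Y P) {a : ℝ≥0∞}
    (ha : ∀ᵐ ω ∂P, a ≤ P⁻[Y|m] ω) :
    a * ∫⁻ ω, f ω ∂P ≤ ∫⁻ ω, f ω * Y ω ∂P := by
  have hf' : Measurable f := hf.mono hm le_rfl
  calc a * ∫⁻ ω, f ω ∂P = ∫⁻ ω, a * f ω ∂P := (lintegral_const_mul a hf').symm
    _ ≤ ∫⁻ ω, f ω * P⁻[Y|m] ω ∂P :=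
      lintegral_mono_ae (ha.mono fun ω h => by rw [mul_comm]; gcongr)
    _ = ∫⁻ ω, f ω * Y ω ∂P := (lintegral_mul_condLExp hm hf hY).symm

theorem lintegral_mul_le_mul_lintegral (hm : m ≤ mΩ) [SigmaFinite (P.trim hm)]
    {f Y : Ω → ℝ≥0∞} (hf : Measurable[m] f) (hY : AEMeasurable Y P) {b : ℝ≥0∞}
    (hb : ∀ᵐ ω ∂P, P⁻[Y|m] ω ≤ b) :
    ∫⁻ ω, f ω * Y ω ∂P ≤ b * ∫⁻ ω, f ω ∂P := by
  have hf' : Measurable f := hf.mono hm le_rfl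
  calc ∫⁻ ω, f ω * Y ω ∂P = ∫⁻ ω, f ω * P⁻[Y|m] ω ∂P := lintegral_mul_condLExp hm hf hY
    _ ≤ ∫⁻ ω, b * f ω ∂P := lintegral_mono_ae (hb.mono fun ω h => by rw [mul_comm]; gcongr)
    _ = b * ∫⁻ ω, f ω ∂P := lintegral_const_mul b hf'

section

variable [IsProbabilityMeasure P]

theorem prod_le_lintegral_prod_le_prod {F : ℕ → MeasurableSpace Ω} {G : ℕ → Ω → ℝ≥0∞}
    {a b : ℕ → ℝ≥0∞} {n : ℕ} (hF : ∀ l < n, F l ≤ F (l + 1)) (hFle : ∀ l ≤ n, F l ≤ mΩ)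
    (hG : ∀ l < n, Measurable[F (l + 1)] (G l))
    (hab : ∀ l < n, ∀ᵐ ω ∂P, a l ≤ P⁻[G l|F l] ω ∧ P⁻[G l|F l] ω ≤ b l) :
    ∏ l ∈ Finset.range n, a l ≤ ∫⁻ ω, ∏ l ∈ Finset.range n, G l ω ∂P ∧
      ∫⁻ ω, ∏ l ∈ Finset.range n, G l ω ∂P ≤ ∏ l ∈ Finset.range n, b l := by
  induction n with
  | zero => simp
  | succ n ih =>
    obtain ⟨ih_low, ih_up⟩ := ih (fun l hl => hF l (by omega)) (fun l hl => hFle l (by omega))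
      (fun l hl => hG l (by omega)) (fun l hl => hab l (by omega))
    have hprod := measurable_prod_range_of_adapted (fun l hl => hF l (by omega))
      (fun l (hl : l < n) => hG l (by omega))
    have hGn : AEMeasurable (G n) P :=
      ((hG n (by omega)).mono (hFle _ le_rfl) le_rfl).aemeasurable
    have hm := hFle n (by omega)
    have hlow :=
      mul_lintegral_le_lintegral_mul hm hprod hGn ((hab n (by omega)).mono fun _ h => h.1)
    have hup :=
      lintegral_mul_le_mul_lintegral hm hprod hGn ((hab n (by omega)).mono fun _ h => h.2)
    simp only [Finset.prod_range_succ]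
    constructor
    · calc (∏ l ∈ Finset.range n, a l) * a n
          ≤ a n * ∫⁻ ω, ∏ l ∈ Finset.range n, G l ω ∂P := by rw [mul_comm]; gcongr
        _ ≤ _ := hlow
    · calc _ ≤ b n * ∫⁻ ω, ∏ l ∈ Finset.range n, G l ω ∂P := hup
        _ ≤ (∏ l ∈ Finset.range n, b l) * b n := by rw [mul_comm]; gcongr

end

variable {X Y : Ω → ℝ}

theorem Integrable.sqrt_mul (hX0 : ∀ ω, 0 ≤ X ω) (hY0 : ∀ ω, 0 ≤ Y ω) (hX : Integrable X P)
    (hY : Integrable Y P) : Integrable (fun ω => √(X ω * Y ω)) P := by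
  refine ((hX.add hY).div_const 2).mono
    (continuous_sqrt.comp_aestronglyMeasurable (hX.1.mul hY.1)) (ae_of_all _ fun ω => ?_)
  have hsq := sq_sqrt_sub_sqrt (hX0 ω) (hY0 ω)
  simp only [Pi.add_apply]
  rw [norm_of_nonneg (sqrt_nonneg _), norm_of_nonneg (by linarith [hX0 ω, hY0 ω])]
  nlinarith [sq_nonneg (√(X ω) - √(Y ω))]

theorem condExp_sq_sub_sqrt_ae_eq (hX0 : ∀ ω, 0 ≤ X ω) (hY0 : ∀ ω, 0 ≤ Y ω)
    (hX : Integrable X P) (hY : Integrable Y P) :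
    P[fun ω => (√(X ω) - √(Y ω)) ^ 2 | m]
      =ᵐ[P] P[X|m] + P[Y|m] - (2 : ℝ) • P[fun ω => √(X ω * Y ω)|m] := by
  have hid : (fun ω => (√(X ω) - √(Y ω)) ^ 2) = X + Y - (2 : ℝ) • fun ω => √(X ω * Y ω) := by
    ext ω
    simp [sq_sqrt_sub_sqrt (hX0 ω) (hY0 ω)]
  rw [hid]
  exact (condExp_sub (hX.add hY) ((hX.sqrt_mul hX0 hY0 hY).smul 2) m).trans
    ((condExp_add hX hY m).sub (condExp_smul 2 _ m))

theorem condExp_sq_sub_sqrt_ae_eq_two_sub (hX0 : ∀ ω, 0 ≤ X ω) (hY0 : ∀ ω, 0 ≤ Y ω)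
    (hX : Integrable X P) (hY : Integrable Y P) (hXc : P[X|m] =ᵐ[P] 1) (hYc : P[Y|m] =ᵐ[P] 1) :
    ∀ᵐ ω ∂P, P[fun ω => (√(X ω) - √(Y ω)) ^ 2 | m] ω
      = 2 - 2 * P[fun ω => √(X ω * Y ω)|m] ω := by
  filter_upwards [condExp_sq_sub_sqrt_ae_eq (m := m) hX0 hY0 hX hY, hXc, hYc]
    with ω h hXω hYω
  simp only [h, Pi.sub_apply, Pi.add_apply, Pi.smul_apply, hXω, hYω, Pi.one_apply, smul_eq_mul]
  ring

theorem condExp_sq_sub_sqrt_mem_Icc (hX0 : ∀ ω, 0 ≤ X ω) (hY0 : ∀ ω, 0 ≤ Y ω)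
    (hX : Integrable X P) (hY : Integrable Y P) (hXc : P[X|m] =ᵐ[P] 1) (hYc : P[Y|m] =ᵐ[P] 1) :
    ∀ᵐ ω ∂P, P[fun ω => (√(X ω) - √(Y ω)) ^ 2 | m] ω ∈ Set.Icc 0 2 := by
  filter_upwards [condExp_sq_sub_sqrt_ae_eq_two_sub hX0 hY0 hX hY hXc hYc,
    condExp_nonneg (m := m) (ae_of_all P fun ω => sq_nonneg (√(X ω) - √(Y ω))),
    condExp_nonneg (m := m) (ae_of_all P fun ω => sqrt_nonneg (X ω * Y ω))] with ω h hq hg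
  exact ⟨hq, by linarith [show (0 : ℝ) ≤ _ from hg]⟩

theorem essSup_condExp_sq_sub_sqrt_le_two [NeZero P]
    (hX0 : ∀ ω, 0 ≤ X ω) (hY0 : ∀ ω, 0 ≤ Y ω)
    (hX : Integrable X P) (hY : Integrable Y P) (hXc : P[X|m] =ᵐ[P] 1) (hYc : P[Y|m] =ᵐ[P] 1) :
    essSup P[fun ω => (√(X ω) - √(Y ω)) ^ 2 | m] P ≤ 2 := by
  have hIcc := condExp_sq_sub_sqrt_mem_Icc hX0 hY0 hX hY hXc hYc
  refine essSup_le_of_ae_le 2 (hIcc.mono fun _ h => h.2)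
    (Filter.IsBoundedUnder.isCoboundedUnder_le ⟨0, ?_⟩)
  exact Filter.eventually_map.2 (hIcc.mono fun _ h => h.1)

theorem ofReal_le_condLExp_sqrt_mul_le_one (hX0 : ∀ ω, 0 ≤ X ω) (hY0 : ∀ ω, 0 ≤ Y ω)
    (hX : Integrable X P) (hY : Integrable Y P) (hXc : P[X|m] =ᵐ[P] 1) (hYc : P[Y|m] =ᵐ[P] 1) :
    ∀ᵐ ω ∂P,
      ENNReal.ofReal (1 - 1 / 2 * essSup P[fun ω => (√(X ω) - √(Y ω)) ^ 2 | m] P)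
        ≤ P⁻[fun ω => ENNReal.ofReal √(X ω * Y ω)|m] ω ∧
      P⁻[fun ω => ENNReal.ofReal √(X ω * Y ω)|m] ω ≤ 1 := by
  have hIcc := condExp_sq_sub_sqrt_mem_Icc hX0 hY0 hX hY hXc hYc
  have hbdd : Filter.IsBoundedUnder (· ≤ ·) (ae P) P[fun ω => (√(X ω) - √(Y ω)) ^ 2 | m] :=
    ⟨2, Filter.eventually_map.2 (hIcc.mono fun _ h => h.2)⟩
  filter_upwards
    [condLExp_ofReal m (hX.sqrt_mul hX0 hY0 hY) (ae_of_all P fun ω => sqrt_nonneg _),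
    condExp_sq_sub_sqrt_ae_eq_two_sub hX0 hY0 hX hY hXc hYc, hIcc, ae_le_essSup hbdd]
    with ω hL h hq hq_le
  rw [hL, ← ENNReal.ofReal_one]
  constructor <;> apply ENNReal.ofReal_le_ofReal <;> linarith [hq.1]

end MeasureTheory

/-- Lower bound on the expected product of square roots of conditional likelihood
ratios (inner estimate in the proof of Lemma 3.1 of Grama–Neumann). -/
theorem product_sqrt_likelihood_lower_bound
    {Ω : Type*} [mΩ : MeasurableSpace Ω] (P : Measure Ω) [IsProbabilityMeasure P]
    (K : ℕ) (F : ℕ → MeasurableSpace Ω)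
    (hF_mono : ∀ l, l ≤ K → F l ≤ F (l + 1))
    (hF_le : ∀ l, l ≤ K + 1 → F l ≤ mΩ)
    (L1 L2 : ℕ → Ω → ℝ)
    (hL1_nonneg : ∀ l, l ≤ K → ∀ ω, 0 ≤ L1 l ω)
    (hL2_nonneg : ∀ l, l ≤ K → ∀ ω, 0 ≤ L2 l ω)
    (hL1_int : ∀ l, l ≤ K → Integrable (L1 l) P)
    (hL2_int : ∀ l, l ≤ K → Integrable (L2 l) P)
    (hL1_meas : ∀ l, l ≤ K → StronglyMeasurable[F (l + 1)] (L1 l))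
    (hL2_meas : ∀ l, l ≤ K → StronglyMeasurable[F (l + 1)] (L2 l))
    (hL1_ce : ∀ l, l ≤ K → P[L1 l | F l] =ᵐ[P] fun _ => (1 : ℝ))
    (hL2_ce : ∀ l, l ≤ K → P[L2 l | F l] =ᵐ[P] fun _ => (1 : ℝ)) :
    ∏ l ∈ Finset.range (K + 1),
        (1 - (1 / 2) *
          essSup (P[fun ω => (Real.sqrt (L1 l ω) - Real.sqrt (L2 l ω)) ^ 2 | F l]) P)
      ≤ ∫ ω, ∏ l ∈ Finset.range (K + 1), Real.sqrt (L1 l ω * L2 l ω) ∂P := by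
  have hg_meas (l : ℕ) (hl : l ≤ K) : Measurable[F (l + 1)] fun ω => √(L1 l ω * L2 l ω) :=
    ((hL1_meas l hl).measurable.mul (hL2_meas l hl).measurable).sqrt
  obtain ⟨hlow, hup⟩ := prod_le_lintegral_prod_le_prod (P := P) (n := K + 1) (b := 1)
    (G := fun l ω => ENNReal.ofReal √(L1 l ω * L2 l ω))
    (fun l hl => hF_mono l (by omega)) hF_le
    (fun l hl => (hg_meas l (by omega)).ennreal_ofReal)
    (fun l hl => ofReal_le_condLExp_sqrt_mul_le_one (hL1_nonneg l (by omega))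
      (hL2_nonneg l (by omega)) (hL1_int l (by omega)) (hL2_int l (by omega))
      (hL1_ce l (by omega)) (hL2_ce l (by omega)))
  have hc_nonneg (l : ℕ) (hl : l ∈ Finset.range (K + 1)) :
      0 ≤ 1 - 1 / 2 * essSup P[fun ω => (√(L1 l ω) - √(L2 l ω)) ^ 2 | F l] P := by
    rw [Finset.mem_range_succ_iff] at hl
    linarith [essSup_condExp_sq_sub_sqrt_le_two (hL1_nonneg l hl) (hL2_nonneg l hl)
      (hL1_int l hl) (hL2_int l hl) (hL1_ce l hl) (hL2_ce l hl)]
  have hg_nonneg (ω : Ω) (l : ℕ) (_ : l ∈ Finset.range (K + 1)) : 0 ≤ √(L1 l ω * L2 l ω) :=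
    sqrt_nonneg _
  have hg_aesm :
      AEStronglyMeasurable (fun ω => ∏ l ∈ Finset.range (K + 1), √(L1 l ω * L2 l ω)) P :=
    ((measurable_prod_range_of_adapted (fun l hl => hF_mono l (by omega))
      (fun l hl => hg_meas l (by omega))).mono (hF_le _ le_rfl) le_rfl).aestronglyMeasurable
  rw [integral_eq_lintegral_of_nonneg_ae
    (ae_of_all _ fun ω => Finset.prod_nonneg (hg_nonneg ω)) hg_aesm]
  simp only [ENNReal.ofReal_prod_of_nonneg (hg_nonneg _)]
  rw [← ENNReal.ofReal_le_iff_le_toReal (ne_top_of_le_ne_top (by simp) hup),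
    ENNReal.ofReal_prod_of_nonneg hc_nonneg]
  exact hlow
end

section
/- Let p be a probability density on ℝ, let M > 0, and let f, f_0: ℝ → ℝ be measurable with sup_x |f(x)| ≤ M and sup_x |f_0(x)| ≤ M. Let ψ_f and ψ_{f_0} be probability densities that are invariant for f and f_0 respectively, and assume ρ := (1/2) sup_{x_1, x_2 ∈ [−M, M]} ∫ |p(x − x_1) − p(x − x_2)| dx < 1. Then ∫ |ψ_f(x) − ψ_{f_0}(x)| dx ≤ (1 − ρ)^{−1} · sup_{u ∈ [0, ‖f − f_0‖_∞]} ∫ |p(x) − p(x − u)| dx, where ‖f − f_0‖_∞ = sup_x |f(x) − f_0(x)|. -/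
/-!
Write `ψf - ψf0 = A + B` almost everywhere, with `A x = ∫ (p (x - f y) - p (x - f0 y)) ψf y dy`
and `B x = ∫ p (x - f0 y) (ψf y - ψf0 y) dy`. By Tonelli, `‖A‖₁` is at most the largest
`L¹`-distance between the translates `p (· - f y)` and `p (· - f0 y)`, and translation invariance
bounds that by the supremum `S` of `‖p - p (· - u)‖₁` over `u ∈ [0, ‖f - f0‖∞]`. The term `B`
applies the kernel of `f0` to a signed density of total mass zero; pairing its positive and
negative parts, each of mass `D / 2` where `D = ‖ψf - ψf0‖₁`, turns `B` into an average of
differences of two columns of the kernel, whence Dobrushin's contraction `‖B‖₁ ≤ ρ D`.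
So `D ≤ S + ρ D`, and `ρ < 1` gives the claim.
-/

open MeasureTheory Real
open scoped ENNReal

section KernelBounds

variable {X Y : Type*} [MeasurableSpace X] [MeasurableSpace Y] {μ : Measure X} {ν : Measure Y}
  [SFinite μ] [SFinite ν]

theorem lintegral_lintegral_mul_le_mul_lintegral {G : X → Y → ℝ≥0∞}
    (hG : Measurable (Function.uncurry G)) {w : Y → ℝ≥0∞} (hw : Measurable w) {C : ℝ≥0∞}
    (hC : ∀ y, ∫⁻ x, G x y ∂μ ≤ C) :
    ∫⁻ x, ∫⁻ y, G x y * w y ∂ν ∂μ ≤ C * ∫⁻ y, w y ∂ν := by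
  rw [lintegral_lintegral_swap (hG.mul (hw.comp measurable_snd)).aemeasurable,
    ← lintegral_const_mul _ hw]
  refine lintegral_mono fun y => ?_
  rw [lintegral_mul_const _ hG.of_uncurry_right]
  exact mul_le_mul_left (hC y) _

theorem ae_integrable_mul_of_lintegral_enorm_le {K : X → Y → ℝ}
    (hK : Measurable (Function.uncurry K)) {B : ℝ≥0∞} (hB : B ≠ ∞)
    (hKB : ∀ y, ∫⁻ x, ‖K x y‖ₑ ∂μ ≤ B) {ψ : Y → ℝ} (hψ_meas : Measurable ψ)
    (hψ : Integrable ψ ν) : ∀ᵐ x ∂μ, Integrable (fun y => K x y * ψ y) ν := by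
  have hfin : ∫⁻ x, ∫⁻ y, ‖K x y‖ₑ * ‖ψ y‖ₑ ∂ν ∂μ ≠ ∞ :=
    ne_top_of_le_ne_top (ENNReal.mul_ne_top hB hψ.2.ne)
      (lintegral_lintegral_mul_le_mul_lintegral hK.enorm hψ_meas.enorm hKB)
  refine (ae_lt_top ?_ hfin).mono fun x hx =>
    ⟨(hK.of_uncurry_left.mul hψ_meas).aestronglyMeasurable, ?_⟩
  · exact (hK.enorm.mul (hψ_meas.comp measurable_snd).enorm).lintegral_prod_right'
  · simpa only [HasFiniteIntegral, enorm_mul] using hx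

theorem lintegral_enorm_integral_mul_le {F : X → Y → ℝ} (hF : Measurable (Function.uncurry F))
    {w : Y → ℝ} (hw : Measurable w) {C : ℝ≥0∞} (hC : ∀ y, ∫⁻ x, ‖F x y‖ₑ ∂μ ≤ C) :
    ∫⁻ x, ‖∫ y, F x y * w y ∂ν‖ₑ ∂μ ≤ C * ∫⁻ y, ‖w y‖ₑ ∂ν :=
  calc ∫⁻ x, ‖∫ y, F x y * w y ∂ν‖ₑ ∂μ ≤ ∫⁻ x, ∫⁻ y, ‖F x y‖ₑ * ‖w y‖ₑ ∂ν ∂μ :=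
        lintegral_mono fun x => by
          simpa only [enorm_mul] using enorm_integral_le_lintegral_enorm (fun y => F x y * w y)
    _ ≤ C * ∫⁻ y, ‖w y‖ₑ ∂ν := lintegral_lintegral_mul_le_mul_lintegral hF.enorm hw.enorm hC

theorem integral_mul_sub_integral_mul_eq_integral_prod {k a b : Y → ℝ}
    (hka : Integrable (fun y => k y * a y) ν) (hkb : Integrable (fun y => k y * b y) ν)
    (ha : Integrable a ν) (hb : Integrable b ν) :
    (∫ y, b y ∂ν) * (∫ y, k y * a y ∂ν) - (∫ y, a y ∂ν) * ∫ y, k y * b y ∂ν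
      = ∫ z, (k z.1 - k z.2) * (a z.1 * b z.2) ∂ν.prod ν := by
  rw [mul_comm (∫ y, b y ∂ν), ← integral_prod_mul, ← integral_prod_mul,
    ← integral_sub (hka.mul_prod hb) (ha.mul_prod hkb)]
  congr 1 with z
  ring

omit [SFinite ν] in
theorem integral_negPart_eq_integral_posPart {g : Y → ℝ} (hg : Integrable g ν)
    (hg0 : ∫ y, g y ∂ν = 0) : ∫ y, (g y)⁻ ∂ν = ∫ y, (g y)⁺ ∂ν := by
  have hpos : Integrable (fun y => (g y)⁺) ν := hg.pos_part
  have hneg : Integrable (fun y => (g y)⁻) ν := hg.neg_part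
  refine (sub_eq_zero.1 ?_).symm
  rw [← integral_sub hpos hneg]
  simpa only [posPart_sub_negPart] using hg0

omit [SFinite ν] in
theorem lintegral_enorm_eq_two_mul_ofReal_integral_posPart {g : Y → ℝ} (hg : Integrable g ν)
    (hg0 : ∫ y, g y ∂ν = 0) : ∫⁻ y, ‖g y‖ₑ ∂ν = 2 * ENNReal.ofReal (∫ y, (g y)⁺ ∂ν) := by
  have hm0 : 0 ≤ ∫ y, (g y)⁺ ∂ν := integral_nonneg fun y => posPart_nonneg _
  have hpos : Integrable (fun y => (g y)⁺) ν := hg.pos_part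
  have hneg : Integrable (fun y => (g y)⁻) ν := hg.neg_part
  rw [← ofReal_integral_norm_eq_lintegral_enorm hg]
  simp only [norm_eq_abs, ← posPart_add_negPart]
  rw [integral_add hpos hneg, integral_negPart_eq_integral_posPart hg hg0,
    ENNReal.ofReal_add hm0 hm0, two_mul]

theorem lintegral_prod_enorm_posPart_mul_negPart {g : Y → ℝ} (hg_meas : Measurable g)
    (hg : Integrable g ν) (hg0 : ∫ y, g y ∂ν = 0) :
    ∫⁻ z, ‖(g z.1)⁺ * (g z.2)⁻‖ₑ ∂ν.prod ν
      = ENNReal.ofReal (∫ y, (g y)⁺ ∂ν) * ENNReal.ofReal (∫ y, (g y)⁺ ∂ν) := by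
  have hpart : ∀ part : ℝ → ℝ, (∀ t, 0 ≤ part t) → Integrable (fun y => part (g y)) ν →
      ∫⁻ y, ‖part (g y)‖ₑ ∂ν = ENNReal.ofReal (∫ y, part (g y) ∂ν) := fun part hpart hint => by
    rw [lintegral_enorm_of_nonneg fun y => hpart _,
      ofReal_integral_eq_lintegral_ofReal hint (.of_forall fun y => hpart _)]
  simp only [enorm_mul]
  rw [lintegral_prod_mul hg_meas.posPart.enorm.aemeasurable hg_meas.negPart.enorm.aemeasurable,
    hpart _ posPart_nonneg hg.pos_part, hpart _ negPart_nonneg hg.neg_part,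
    integral_negPart_eq_integral_posPart hg hg0]

theorem enorm_integral_posPart_mul_integral_le {k g : Y → ℝ} (hk : AEStronglyMeasurable k ν)
    (hg : Integrable g ν) (hg0 : ∫ y, g y ∂ν = 0) (hkg : Integrable (fun y => k y * g y) ν) :
    ‖(∫ y, (g y)⁺ ∂ν) * ∫ y, k y * g y ∂ν‖ₑ
      ≤ ∫⁻ z, ‖k z.1 - k z.2‖ₑ * ‖(g z.1)⁺ * (g z.2)⁻‖ₑ ∂ν.prod ν := by
  have hpos : Integrable (fun y => (g y)⁺) ν := hg.pos_part
  have hneg : Integrable (fun y => (g y)⁻) ν := hg.neg_part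
  have hk_part : ∀ (part : ℝ → ℝ), (∀ t, 0 ≤ part t ∧ part t ≤ |t|) →
      Integrable (fun y => part (g y)) ν → Integrable (fun y => k y * part (g y)) ν :=
    fun part hpart hint => hkg.mono (hk.mul hint.aestronglyMeasurable) <| .of_forall fun y => by
      simp only [norm_mul, norm_eq_abs, abs_of_nonneg (hpart _).1]
      exact mul_le_mul_of_nonneg_left (hpart _).2 (abs_nonneg _)
  have hpart_le : ∀ t : ℝ, t⁺ ≤ |t| ∧ t⁻ ≤ |t| := fun t => by
    constructor <;> linarith [posPart_add_negPart t, posPart_nonneg t, negPart_nonneg t]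
  have hkpos := hk_part _ (fun t => ⟨posPart_nonneg t, (hpart_le t).1⟩) hpos
  have hkneg := hk_part _ (fun t => ⟨negPart_nonneg t, (hpart_le t).2⟩) hneg
  have hmass := integral_negPart_eq_integral_posPart hg hg0
  have hkg_split : ∫ y, k y * g y ∂ν = (∫ y, k y * (g y)⁺ ∂ν) - ∫ y, k y * (g y)⁻ ∂ν := by
    rw [← integral_sub hkpos hkneg]
    simp only [← mul_sub, posPart_sub_negPart]
  calc ‖(∫ y, (g y)⁺ ∂ν) * ∫ y, k y * g y ∂ν‖ₑ
      = ‖∫ z, (k z.1 - k z.2) * ((g z.1)⁺ * (g z.2)⁻) ∂ν.prod ν‖ₑ := by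
        rw [← integral_mul_sub_integral_mul_eq_integral_prod hkpos hkneg hpos hneg, hmass,
          hkg_split, mul_sub]
    _ ≤ _ := by
        simpa only [enorm_mul] using enorm_integral_le_lintegral_enorm
          (fun z : Y × Y => (k z.1 - k z.2) * ((g z.1)⁺ * (g z.2)⁻))

theorem lintegral_enorm_integral_mul_le_of_integral_eq_zero {K : X → Y → ℝ}
    (hK : Measurable (Function.uncurry K)) {g : Y → ℝ} (hg_meas : Measurable g)
    (hg : Integrable g ν) (hg0 : ∫ y, g y ∂ν = 0)
    (hKg : ∀ᵐ x ∂μ, Integrable (fun y => K x y * g y) ν) {ρ : ℝ≥0∞}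
    (hρ : ∀ y₁ y₂, ∫⁻ x, ‖K x y₁ - K x y₂‖ₑ ∂μ ≤ 2 * ρ) :
    ∫⁻ x, ‖∫ y, K x y * g y ∂ν‖ₑ ∂μ ≤ ρ * ∫⁻ y, ‖g y‖ₑ ∂ν := by
  set m := ∫ y, (g y)⁺ ∂ν
  have hm0 : 0 ≤ m := integral_nonneg fun y => posPart_nonneg _
  have hnorm := lintegral_enorm_eq_two_mul_ofReal_integral_posPart hg hg0
  rcases eq_or_ne (ENNReal.ofReal m) 0 with hm | hm
  · have hg_ae : g =ᵐ[ν] 0 := by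
      rw [hm, mul_zero] at hnorm
      exact ((lintegral_eq_zero_iff hg_meas.enorm).1 hnorm).mono fun y hy => by simpa using hy
    have hKg0 : ∀ x, ∫ y, K x y * g y ∂ν = 0 := fun x =>
      integral_eq_zero_of_ae (hg_ae.mono fun y hy => by simp [hy])
    simp [hKg0]
  have hscaled : ENNReal.ofReal m * ∫⁻ x, ‖∫ y, K x y * g y ∂ν‖ₑ ∂μ
      ≤ ENNReal.ofReal m * (ρ * (2 * ENNReal.ofReal m)) :=
    calc ENNReal.ofReal m * ∫⁻ x, ‖∫ y, K x y * g y ∂ν‖ₑ ∂μ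
        = ∫⁻ x, ‖m * ∫ y, K x y * g y ∂ν‖ₑ ∂μ := by
          simp only [enorm_mul, Real.enorm_eq_ofReal hm0]
          exact (lintegral_const_mul' _ _ ENNReal.ofReal_ne_top).symm
      _ ≤ ∫⁻ x, ∫⁻ z, ‖K x z.1 - K x z.2‖ₑ * ‖(g z.1)⁺ * (g z.2)⁻‖ₑ ∂ν.prod ν ∂μ := by
          refine lintegral_mono_ae (hKg.mono fun x hx => ?_)
          exact enorm_integral_posPart_mul_integral_le
            hK.of_uncurry_left.aestronglyMeasurable hg hg0 hx
      _ ≤ 2 * ρ * (ENNReal.ofReal m * ENNReal.ofReal m) := by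
          rw [← lintegral_prod_enorm_posPart_mul_negPart hg_meas hg hg0]
          refine lintegral_lintegral_mul_le_mul_lintegral
            (G := fun x (z : Y × Y) => ‖K x z.1 - K x z.2‖ₑ) ?_ ?_ fun z => hρ z.1 z.2
          · exact ((hK.comp (measurable_fst.prodMk measurable_snd.fst)).sub
              (hK.comp (measurable_fst.prodMk measurable_snd.snd))).enorm
          · exact ((hg_meas.comp measurable_fst).posPart.mul
              (hg_meas.comp measurable_snd).negPart).enorm
      _ = ENNReal.ofReal m * (ρ * (2 * ENNReal.ofReal m)) := by ring
  rw [hnorm]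
  exact (ENNReal.mul_le_mul_iff_right hm ENNReal.ofReal_ne_top).mp hscaled

theorem lintegral_enorm_sub_le_of_stationary {K K₀ : X → X → ℝ}
    (hK : Measurable (Function.uncurry K)) (hK₀ : Measurable (Function.uncurry K₀))
    {B : ℝ≥0∞} (hB : B ≠ ∞) (hKB : ∀ y, ∫⁻ x, ‖K x y‖ₑ ∂μ ≤ B)
    (hK₀B : ∀ y, ∫⁻ x, ‖K₀ x y‖ₑ ∂μ ≤ B) {ψ ψ₀ : X → ℝ} (hψ_meas : Measurable ψ)
    (hψ₀_meas : Measurable ψ₀) (hψ : Integrable ψ μ) (hψ₀ : Integrable ψ₀ μ)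
    (hmass : ∫ x, ψ x ∂μ = ∫ x, ψ₀ x ∂μ) (hinv : ∀ᵐ x ∂μ, ψ x = ∫ y, K x y * ψ y ∂μ)
    (hinv₀ : ∀ᵐ x ∂μ, ψ₀ x = ∫ y, K₀ x y * ψ₀ y ∂μ) {C ρ : ℝ≥0∞}
    (hC : ∀ y, ∫⁻ x, ‖K x y - K₀ x y‖ₑ ∂μ ≤ C)
    (hρ : ∀ y₁ y₂, ∫⁻ x, ‖K₀ x y₁ - K₀ x y₂‖ₑ ∂μ ≤ 2 * ρ) :
    ∫⁻ x, ‖ψ x - ψ₀ x‖ₑ ∂μ ≤ C * ∫⁻ x, ‖ψ x‖ₑ ∂μ + ρ * ∫⁻ x, ‖ψ x - ψ₀ x‖ₑ ∂μ := by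
  have hK₀ψ := ae_integrable_mul_of_lintegral_enorm_le hK₀ hB hK₀B hψ_meas hψ
  have hK₀ψ₀ := ae_integrable_mul_of_lintegral_enorm_le hK₀ hB hK₀B hψ₀_meas hψ₀
  have hsplit : ∀ᵐ x ∂μ, ‖ψ x - ψ₀ x‖ₑ ≤ ‖∫ y, (K x y - K₀ x y) * ψ y ∂μ‖ₑ
      + ‖∫ y, K₀ x y * (ψ y - ψ₀ y) ∂μ‖ₑ := by
    filter_upwards [hinv, hinv₀, ae_integrable_mul_of_lintegral_enorm_le hK hB hKB hψ_meas hψ,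
      hK₀ψ, hK₀ψ₀] with x h₁ h₂ i₁ i₂ i₃
    refine le_of_eq_of_le (congrArg _ ?_) (enorm_add_le _ _)
    simp only [sub_mul, mul_sub]
    rw [integral_sub i₁ i₂, integral_sub i₂ i₃, ← h₁, ← h₂]
    ring
  have hKψ_meas : AEMeasurable (fun x => ‖∫ y, (K x y - K₀ x y) * ψ y ∂μ‖ₑ) μ :=
    ((hK.sub hK₀).mul (hψ_meas.comp measurable_snd)).stronglyMeasurable.integral_prod_right'
      |>.measurable.enorm.aemeasurable
  have hK₀g : ∀ᵐ x ∂μ, Integrable (fun y => K₀ x y * (ψ y - ψ₀ y)) μ := by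
    filter_upwards [hK₀ψ, hK₀ψ₀] with x h₁ h₂
    simpa only [mul_sub] using h₁.sub' h₂
  calc ∫⁻ x, ‖ψ x - ψ₀ x‖ₑ ∂μ
      ≤ ∫⁻ x, ‖∫ y, (K x y - K₀ x y) * ψ y ∂μ‖ₑ + ‖∫ y, K₀ x y * (ψ y - ψ₀ y) ∂μ‖ₑ ∂μ :=
        lintegral_mono_ae hsplit
    _ = ∫⁻ x, ‖∫ y, (K x y - K₀ x y) * ψ y ∂μ‖ₑ ∂μ
        + ∫⁻ x, ‖∫ y, K₀ x y * (ψ y - ψ₀ y) ∂μ‖ₑ ∂μ := lintegral_add_left' hKψ_meas _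
    _ ≤ _ := add_le_add (lintegral_enorm_integral_mul_le (hK.sub hK₀) hψ_meas hC)
        (lintegral_enorm_integral_mul_le_of_integral_eq_zero (g := fun y => ψ y - ψ₀ y) hK₀
          (hψ_meas.sub hψ₀_meas)
          (hψ.sub' hψ₀) (by rw [integral_sub hψ hψ₀, hmass, sub_self]) hK₀g hρ)

end KernelBounds

section Translates

variable {p : ℝ → ℝ}

theorem measurable_uncurry_comp_sub {h : ℝ → ℝ} (hp : Measurable p) (hh : Measurable h) :
    Measurable (Function.uncurry fun x y => p (x - h y)) :=
  hp.comp (measurable_fst.sub (hh.comp measurable_snd))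

theorem integral_abs_sub_comp_sub_eq (a b : ℝ) :
    ∫ x, |p (x - a) - p (x - b)| = ∫ x, |p x - p (x - (b - a))| := by
  rw [← integral_sub_right_eq_self (fun x => |p x - p (x - (b - a))|) a]
  simp only [sub_sub_sub_cancel_right]

theorem integral_abs_sub_comp_sub_le (hp : Integrable p) (a b : ℝ) :
    ∫ x, |p (x - a) - p (x - b)| ≤ 2 * ∫ x, |p x| := by
  have hpa := (hp.comp_sub_right a).abs
  have hpb := (hp.comp_sub_right b).abs
  calc ∫ x, |p (x - a) - p (x - b)|
      ≤ ∫ x, (|p (x - a)| + |p (x - b)|) :=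
        integral_mono ((hp.comp_sub_right a).sub (hp.comp_sub_right b)).abs (hpa.add hpb)
          fun x => abs_sub _ _
    _ = 2 * ∫ x, |p x| := by
        rw [integral_add hpa hpb, integral_sub_right_eq_self (fun x => |p x|),
          integral_sub_right_eq_self (fun x => |p x|), two_mul]

theorem lintegral_enorm_sub_comp_sub (hp : Integrable p) (a b : ℝ) :
    ∫⁻ x, ‖p (x - a) - p (x - b)‖ₑ = ENNReal.ofReal (∫ x, |p (x - a) - p (x - b)|) := by
  have hd : Integrable (fun x => p (x - a) - p (x - b)) :=
    (hp.comp_sub_right a).sub (hp.comp_sub_right b)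
  simp only [← ofReal_integral_norm_eq_lintegral_enorm hd, norm_eq_abs]

theorem integral_abs_sub_comp_sub_le_sSup_Icc (hp : Integrable p) {N a b : ℝ}
    (hab : |a - b| ≤ N) :
    ∫ x, |p (x - a) - p (x - b)| ≤ sSup ((fun u => ∫ x, |p x - p (x - u)|) '' Set.Icc 0 N) := by
  wlog hle : a ≤ b generalizing a b
  · simp only [abs_sub_comm (p (_ - a))]
    exact this (by rwa [abs_sub_comm]) (le_of_not_ge hle)
  have hbdd : BddAbove ((fun u => ∫ x, |p x - p (x - u)|) '' Set.Icc 0 N) := by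
    refine ⟨2 * ∫ x, |p x|, ?_⟩
    rintro _ ⟨u, -, rfl⟩
    simpa using integral_abs_sub_comp_sub_le hp 0 u
  rw [integral_abs_sub_comp_sub_eq]
  refine le_csSup hbdd ⟨b - a, ⟨sub_nonneg.2 hle, ?_⟩, rfl⟩
  rw [abs_sub_comm] at hab
  exact (le_abs_self _).trans hab

theorem integral_abs_sub_comp_sub_le_two_mul_sSup (hp : Integrable p) {M a b : ℝ}
    (ha : |a| ≤ M) (hb : |b| ≤ M) :
    ∫ x, |p (x - a) - p (x - b)| ≤ 2 * sSup ((fun q : ℝ × ℝ =>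
      (1 / 2) * ∫ x, |p (x - q.1) - p (x - q.2)|) '' (Set.Icc (-M) M ×ˢ Set.Icc (-M) M)) := by
  have hbdd : BddAbove ((fun q : ℝ × ℝ => (1 / 2) * ∫ x, |p (x - q.1) - p (x - q.2)|) ''
      (Set.Icc (-M) M ×ˢ Set.Icc (-M) M)) := by
    refine ⟨∫ x, |p x|, ?_⟩
    rintro _ ⟨q, -, rfl⟩
    linarith [integral_abs_sub_comp_sub_le hp q.1 q.2]
  have := le_csSup hbdd ⟨(a, b), ⟨abs_le.1 ha, abs_le.1 hb⟩, rfl⟩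
  linarith

end Translates

theorem le_inv_one_sub_mul_of_ofReal_le {D S ρ : ℝ} (hD : 0 ≤ D) (hS : 0 ≤ S) (hρ₀ : 0 ≤ ρ)
    (hρ : ρ < 1)
    (h : ENNReal.ofReal D ≤ ENNReal.ofReal S + ENNReal.ofReal ρ * ENNReal.ofReal D) :
    D ≤ (1 - ρ)⁻¹ * S := by
  rw [← ENNReal.ofReal_mul hρ₀, ← ENNReal.ofReal_add hS (by positivity),
    ENNReal.ofReal_le_ofReal_iff (by positivity)] at h
  rw [inv_mul_eq_div, le_div_iff₀ (sub_pos.2 hρ)]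
  linarith

theorem l1_stationary_densities_general
    (p : ℝ → ℝ) (hp_meas : Measurable p)
    (hp_int : ∫ x, p x = 1)
    (M : ℝ)
    (f f0 : ℝ → ℝ) (hf_meas : Measurable f) (hf0_meas : Measurable f0)
    (hf_bdd : ∀ x, |f x| ≤ M) (hf0_bdd : ∀ x, |f0 x| ≤ M)
    (ψf ψf0 : ℝ → ℝ)
    (hψf_meas : Measurable ψf) (hψf_nonneg : ∀ x, 0 ≤ ψf x) (hψf_int : ∫ x, ψf x = 1)
    (hψf0_meas : Measurable ψf0) (hψf0_int : ∫ x, ψf0 x = 1)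
    (hinv_f : ∀ᵐ x ∂(volume : Measure ℝ), ψf x = ∫ y, p (x - f y) * ψf y)
    (hinv_f0 : ∀ᵐ x ∂(volume : Measure ℝ), ψf0 x = ∫ y, p (x - f0 y) * ψf0 y)
    (ρ : ℝ)
    (hρ_def : ρ = sSup ((fun q : ℝ × ℝ => (1 / 2) * ∫ x, |p (x - q.1) - p (x - q.2)|) ''
        (Set.Icc (-M) M ×ˢ Set.Icc (-M) M)))
    (hρ_lt_one : ρ < 1) :
    ∫ x, |ψf x - ψf0 x|
      ≤ (1 - ρ)⁻¹ *
        sSup ((fun u : ℝ => ∫ x, |p x - p (x - u)|) ''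
          Set.Icc 0 (⨆ x, |f x - f0 x|)) := by
  have hp : Integrable p := .of_integral_ne_zero (by simp [hp_int])
  have hψf : Integrable ψf := .of_integral_ne_zero (by simp [hψf_int])
  have hψf0 : Integrable ψf0 := .of_integral_ne_zero (by simp [hψf0_int])
  have hN : ∀ y, |f y - f0 y| ≤ ⨆ x, |f x - f0 x| := le_ciSup ⟨M + M, by
    rintro _ ⟨x, rfl⟩
    exact (abs_sub _ _).trans (add_le_add (hf_bdd x) (hf0_bdd x))⟩
  have hψf_norm : ∫⁻ x, ‖ψf x‖ₑ = 1 := by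
    rw [← ofReal_integral_norm_eq_lintegral_enorm hψf]
    simp [abs_of_nonneg (hψf_nonneg _), hψf_int]
  have hstat := lintegral_enorm_sub_le_of_stationary (μ := volume) (ρ := ENNReal.ofReal ρ)
    (measurable_uncurry_comp_sub hp_meas hf_meas) (measurable_uncurry_comp_sub hp_meas hf0_meas)
    hp.hasFiniteIntegral.ne (fun y => (lintegral_sub_right_eq_self (‖p ·‖ₑ) (f y)).le)
    (fun y => (lintegral_sub_right_eq_self (‖p ·‖ₑ) (f0 y)).le) hψf_meas hψf0_meas hψf hψf0
    (by rw [hψf_int, hψf0_int]) hinv_f hinv_f0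
    (fun y => (lintegral_enorm_sub_comp_sub hp _ _).trans_le
      (ENNReal.ofReal_le_ofReal (integral_abs_sub_comp_sub_le_sSup_Icc hp (hN y))))
    (fun y₁ y₂ => (lintegral_enorm_sub_comp_sub hp _ _).trans_le <|
      (ENNReal.ofReal_le_ofReal (hρ_def ▸ integral_abs_sub_comp_sub_le_two_mul_sSup hp
        (hf0_bdd y₁) (hf0_bdd y₂))).trans_eq (by rw [ENNReal.ofReal_mul zero_le_two]; simp))
  rw [hψf_norm, mul_one, ← ofReal_integral_norm_eq_lintegral_enorm (hψf.sub' hψf0)] at hstat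
  simp only [norm_eq_abs] at hstat
  refine le_inv_one_sub_mul_of_ofReal_le (integral_nonneg fun _ => abs_nonneg _)
    (Real.sSup_nonneg ?_) (hρ_def ▸ Real.sSup_nonneg ?_) hρ_lt_one hstat
  · rintro _ ⟨u, -, rfl⟩
    exact integral_nonneg fun _ => abs_nonneg _
  · rintro _ ⟨q, -, rfl⟩
    exact mul_nonneg (by norm_num) (integral_nonneg fun _ => abs_nonneg _)

/-- Total variation (L¹) bound between the stationary densities of two autoregressive
processes (Lemma 6.1 of Grama–Neumann). -/
theorem l1_stationary_densities
    (p : ℝ → ℝ) (hp_meas : Measurable p) (hp_nonneg : ∀ x, 0 ≤ p x)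
    (hp_int : ∫ x, p x = 1)
    (M : ℝ) (hM : 0 < M)
    (f f0 : ℝ → ℝ) (hf_meas : Measurable f) (hf0_meas : Measurable f0)
    (hf_bdd : ∀ x, |f x| ≤ M) (hf0_bdd : ∀ x, |f0 x| ≤ M)
    (ψf ψf0 : ℝ → ℝ)
    (hψf_meas : Measurable ψf) (hψf_nonneg : ∀ x, 0 ≤ ψf x) (hψf_int : ∫ x, ψf x = 1)
    (hψf0_meas : Measurable ψf0) (hψf0_nonneg : ∀ x, 0 ≤ ψf0 x) (hψf0_int : ∫ x, ψf0 x = 1)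
    (hinv_f : ∀ᵐ x ∂(volume : Measure ℝ), ψf x = ∫ y, p (x - f y) * ψf y)
    (hinv_f0 : ∀ᵐ x ∂(volume : Measure ℝ), ψf0 x = ∫ y, p (x - f0 y) * ψf0 y)
    (ρ : ℝ)
    (hρ_def : ρ = sSup ((fun q : ℝ × ℝ => (1 / 2) * ∫ x, |p (x - q.1) - p (x - q.2)|) ''
        (Set.Icc (-M) M ×ˢ Set.Icc (-M) M)))
    (hρ_lt_one : ρ < 1) :
    ∫ x, |ψf x - ψf0 x|
      ≤ (1 - ρ)⁻¹ *
        sSup ((fun u : ℝ => ∫ x, |p x - p (x - u)|) ''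
          Set.Icc 0 (⨆ x, |f x - f0 x|)) :=
  l1_stationary_densities_general p hp_meas hp_int M f f0 hf_meas hf0_meas hf_bdd hf0_bdd ψf ψf0
    hψf_meas hψf_nonneg hψf_int hψf0_meas hψf0_int hinv_f hinv_f0 ρ hρ_def hρ_lt_one
end

section
/- Fix reals A < B. There exists a constant C > 0 depending only on B − A with the following property: for every integer m ≥ 2, every integer j* ≥ 0, every continuously differentiable function g: ℝ → ℝ with bounded derivative, and every array of reals D_{j,k} (0 ≤ j ≤ j* + 1, 1 ≤ k ≤ 2^j) satisfying |D_{j,k}| ≤ (m 2^{−j})^{1/4} log m, one has (B − A)^{−1/2} ( |c_0(g)| |D_{0,1}| + ∑_{j=0}^{j*} 2^{j/2} ∑_{k=1}^{2^j} |c_{j,k}(g)| ( |D_{j+1,2k−1}| + |D_{j+1,2k}| ) ) ≤ C ( ‖g‖_∞ + ‖g‖_∞^{1/4} ‖g'‖_∞^{3/4} ) m^{1/4} log m, where ‖g‖_∞ = sup_x |g(x)| and ‖g'‖_∞ = sup_x |g'(x)|. -/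
open MeasureTheory Real

/-- The dyadic grid points `s_{j,k} = A + k 2^{-j} (B - A)` on `[A, B]`. -/
noncomputable def haarPt (A B : ℝ) (j k : ℕ) : ℝ := A + k * (B - A) / 2 ^ j

/-- The dyadic subinterval `I_{j,k} = (s_{j,k-1}, s_{j,k}]` of `[A, B]`. -/
noncomputable def haarI (A B : ℝ) (j k : ℕ) : Set ℝ :=
  Set.Ioc (haarPt A B j (k - 1)) (haarPt A B j k)

/-- The coarsest Haar basis function `h_0 = (B - A)^{-1/2} 1_{I_{0,1}}`. -/
noncomputable def haarH0 (A B : ℝ) (x : ℝ) : ℝ :=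
  (Real.sqrt (B - A))⁻¹ * (haarI A B 0 1).indicator 1 x

/-- The Haar basis function
`h_{j,k} = (B - A)^{-1/2} 2^{j/2} (1_{I_{j+1,2k-1}} - 1_{I_{j+1,2k}})`. -/
noncomputable def haarH (A B : ℝ) (j k : ℕ) (x : ℝ) : ℝ :=
  (Real.sqrt (B - A))⁻¹ * Real.sqrt (2 ^ j) *
    ((haarI A B (j + 1) (2 * k - 1)).indicator 1 x - (haarI A B (j + 1) (2 * k)).indicator 1 x)

/-- The zeroth Haar coefficient `c_0(g) = ∫_A^B g(t) h_0(t) dt`. -/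
noncomputable def haarC0 (A B : ℝ) (g : ℝ → ℝ) : ℝ := ∫ t in A..B, g t * haarH0 A B t

/-- The Haar coefficient `c_{j,k}(g) = ∫_A^B g(t) h_{j,k}(t) dt`. -/
noncomputable def haarC (A B : ℝ) (j k : ℕ) (g : ℝ → ℝ) : ℝ :=
  ∫ t in A..B, g t * haarH A B j k t

/-! The coefficient `c_{j,k}` compares the integrals of `g` over the two halves of `I_{j,k}`,
intervals of length `ℓ = (B - A) 2^{-j-1}`; this difference is at most `2 ℓ ‖g‖_∞` by size and
at most `ℓ² ‖g'‖_∞` by shifting one half onto the other. Against the weights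
`|D_{j+1,·}| ≲ 2^{-j/4} m^{1/4} log m`, level `j` then contributes
`≲ min(‖g‖_∞ 2^{3j/4}, ‖g'‖_∞ 2^{-j/4}) m^{1/4} log m`. Each minimum is at most the weighted
geometric mean `‖g‖_∞^{1/4} ‖g'‖_∞^{3/4}`, and because one term grows and the other decays
geometrically in `j`, the sum over all levels is a constant times that mean. -/

open Finset

theorem geom_sum_le_of_one_lt {r : ℝ} (hr : 1 < r) (n : ℕ) :
    ∑ i ∈ range (n + 1), r ^ i ≤ r / (r - 1) * r ^ n := by
  have hr1 : 0 < r - 1 := sub_pos.mpr hr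
  rw [geom_sum_eq hr.ne', div_mul_eq_mul_div, div_le_div_iff_of_pos_right hr1, pow_succ']
  linarith

theorem sum_min_geom_le {a b r s P : ℝ} (ha : 0 ≤ a) (hb : 0 ≤ b) (hr : 1 < r) (hs : 0 ≤ s)
    (hs1 : s < 1) (hP : ∀ j, min (a * r ^ j) (b * s ^ j) ≤ P) (n : ℕ) :
    ∑ j ∈ range n, min (a * r ^ j) (b * s ^ j) ≤ (r / (r - 1) + 1 / (1 - s)) * P := by
  have hP0 : 0 ≤ P := (le_min ha hb).trans (by simpa using hP 0)
  have hr1 : 0 < r - 1 := sub_pos.mpr hr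
  have hs1' : 0 < 1 - s := sub_pos.mpr hs1
  -- Split at the first `J` where the decaying term wins: below `J` the summands form a growing
  -- geometric series ending at a minimum, from `J` on a decaying one starting at a minimum.
  have hex : ∃ J, n ≤ J ∨ b * s ^ J < a * r ^ J := ⟨n, Or.inl le_rfl⟩
  set J := Nat.find hex
  have hJn : J ≤ n := Nat.find_min' hex (Or.inl le_rfl)
  have hgrow : ∑ j ∈ range J, a * r ^ j ≤ r / (r - 1) * P := by
    rcases Nat.eq_zero_or_pos J with hJ | hJ
    · rw [hJ, range_zero, sum_empty]
      positivity
    obtain ⟨J', hJ'⟩ : ∃ J', J = J' + 1 := ⟨J - 1, by omega⟩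
    have hlast : a * r ^ J' ≤ b * s ^ J' := by
      have := Nat.find_min hex (show J' < J by omega)
      exact not_lt.mp (not_or.mp this).2
    calc ∑ j ∈ range J, a * r ^ j = a * ∑ j ∈ range (J' + 1), r ^ j := by rw [hJ', mul_sum]
      _ ≤ a * (r / (r - 1) * r ^ J') := by gcongr; exact geom_sum_le_of_one_lt hr J'
      _ = r / (r - 1) * (a * r ^ J') := by ring
      _ ≤ r / (r - 1) * P := by gcongr; exact min_eq_left hlast ▸ hP J'
  have hdecay : ∑ j ∈ Ico J n, b * s ^ j ≤ 1 / (1 - s) * P := by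
    rcases hJn.lt_or_eq with hlt | heq
    · have hfirst : b * s ^ J < a * r ^ J := (Nat.find_spec hex).resolve_left (by omega)
      calc ∑ j ∈ Ico J n, b * s ^ j = b * ∑ j ∈ Ico J n, s ^ j := by rw [mul_sum]
        _ ≤ b * (s ^ J / (1 - s)) := by gcongr; exact geom_sum_Ico_le_of_lt_one hs hs1
        _ = 1 / (1 - s) * (b * s ^ J) := by ring
        _ ≤ 1 / (1 - s) * P := by gcongr; exact min_eq_right hfirst.le ▸ hP J
    · rw [heq, Ico_self, sum_empty]
      positivity
  rw [← sum_range_add_sum_Ico _ hJn, add_mul]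
  gcongr
  · exact hgrow.trans' (sum_le_sum fun j _ => min_le_left _ _)
  · exact hdecay.trans' (sum_le_sum fun j _ => min_le_right _ _)

noncomputable def chainingConst (q : ℝ) : ℝ := q ^ 3 / (q ^ 3 - 1) + 1 / (1 - q⁻¹)

theorem chainingConst_pos {q : ℝ} (hq : 1 < q) : 0 < chainingConst q := by
  have : 0 < q ^ 3 - 1 := sub_pos.mpr (one_lt_pow₀ hq (by norm_num))
  have : 0 < 1 - q⁻¹ := sub_pos.mpr (inv_lt_one_of_one_lt₀ hq)
  unfold chainingConst
  positivity

theorem min_le_of_mul_pow_three_le {u v P : ℝ} (hu : 0 ≤ u) (hv : 0 ≤ v) (hP : 0 ≤ P)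
    (h : u * v ^ 3 ≤ P ^ 4) : min u v ≤ P := by
  have hmin : 0 ≤ min u v := le_min hu hv
  refine (pow_le_pow_iff_left₀ hmin hP (by norm_num : 4 ≠ 0)).mp ?_
  calc min u v ^ 4 = min u v * min u v ^ 3 := by ring
    _ ≤ u * v ^ 3 := by gcongr; exacts [min_le_left _ _, min_le_right _ _]
    _ ≤ P ^ 4 := h

theorem min_growth_decay_le {M K d q : ℝ} (hM : 0 ≤ M) (hK : 0 ≤ K) (hd : 0 ≤ d) (hq : 0 < q)
    (j : ℕ) : min (M * d * (q ^ 3) ^ j) (K * d ^ 2 / 4 * q⁻¹ ^ j) ≤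
      M ^ ((1 : ℝ) / 4) * K ^ ((3 : ℝ) / 4) * (d * d ^ ((3 : ℝ) / 4)) := by
  refine min_le_of_mul_pow_three_le (by positivity) (by positivity) (by positivity) ?_
  have hpow : (M ^ ((1 : ℝ) / 4) * K ^ ((3 : ℝ) / 4) * (d * d ^ ((3 : ℝ) / 4))) ^ 4 =
      M * K ^ 3 * d ^ 7 := by
    simp only [mul_pow, ← Real.rpow_mul_natCast hM, ← Real.rpow_mul_natCast hK,
      ← Real.rpow_mul_natCast hd]
    rw [show (1 : ℝ) / 4 * (4 : ℕ) = 1 by norm_num,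
      show (3 : ℝ) / 4 * (4 : ℕ) = (3 : ℕ) by norm_num, Real.rpow_one, Real.rpow_natCast,
      Real.rpow_natCast]
    ring
  have hnonneg : 0 ≤ M * K ^ 3 * d ^ 7 := by positivity
  calc _ = M * K ^ 3 * d ^ 7 / 64 * (q ^ 3 * q⁻¹ ^ 3) ^ j := by ring
    _ ≤ _ := by
      rw [← mul_pow, mul_inv_cancel₀ hq.ne', one_pow, one_pow, mul_one, hpow]
      linarith

theorem div_two_pow_succ_rpow_quarter_mul_le {x y : ℝ} (hx : 0 ≤ x) (hy : 0 ≤ y) (j : ℕ) :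
    (x / 2 ^ (j + 1)) ^ ((1 : ℝ) / 4) * y ≤
      x ^ ((1 : ℝ) / 4) * y / ((2 : ℝ) ^ ((1 : ℝ) / 4)) ^ j := by
  rw [Real.div_rpow hx (by positivity), ← Real.rpow_pow_comm zero_le_two, div_mul_eq_mul_div]
  gcongr
  exacts [Real.one_le_rpow one_le_two (by norm_num), Nat.le_succ j]

theorem intervalIntegral_indicator_Ioc {A B c d : ℝ} (hAc : A ≤ c) (hcd : c ≤ d) (hdB : d ≤ B)
    (g : ℝ → ℝ) : ∫ t in A..B, (Set.Ioc c d).indicator g t = ∫ t in c..d, g t := by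
  rw [intervalIntegral.integral_of_le (hAc.trans (hcd.trans hdB)),
    intervalIntegral.integral_of_le hcd, setIntegral_indicator measurableSet_Ioc,
    Set.inter_eq_self_of_subset_right (Set.Ioc_subset_Ioc hAc hdB)]

theorem abs_integral_sub_integral_adjacent_le_of_abs_le {g : ℝ → ℝ} {M c ℓ : ℝ} (hℓ : 0 ≤ ℓ)
    (hM : ∀ x, |g x| ≤ M) :
    |(∫ t in c..c + ℓ, g t) - ∫ t in c + ℓ..c + 2 * ℓ, g t| ≤ 2 * M * ℓ := by
  have hbound (a : ℝ) : |∫ t in a..a + ℓ, g t| ≤ M * ℓ := by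
    simpa [abs_of_nonneg hℓ] using intervalIntegral.norm_integral_le_of_norm_le_const
      (a := a) (b := a + ℓ) (C := M) fun t _ => (Real.norm_eq_abs _).trans_le (hM t)
  rw [two_mul, ← add_assoc]
  linarith [abs_sub (∫ t in c..c + ℓ, g t) (∫ t in c + ℓ..c + ℓ + ℓ, g t), hbound c,
    hbound (c + ℓ)]

theorem abs_integral_sub_integral_adjacent_le_of_lipschitz {g : ℝ → ℝ} {K : NNReal} {c ℓ : ℝ}
    (hℓ : 0 ≤ ℓ) (hg : LipschitzWith K g) :
    |(∫ t in c..c + ℓ, g t) - ∫ t in c + ℓ..c + 2 * ℓ, g t| ≤ K * ℓ ^ 2 := by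
  have hshift : ∫ t in c + ℓ..c + 2 * ℓ, g t = ∫ t in c..c + ℓ, g (t + ℓ) := by
    rw [intervalIntegral.integral_comp_add_right]; ring_nf
  have hpt : ∀ t, ‖g t - g (t + ℓ)‖ ≤ K * ℓ := fun t => by
    simpa [dist_eq_norm, abs_of_nonneg hℓ] using hg.dist_le_mul t (t + ℓ)
  have hgc := hg.continuous
  rw [hshift, ← intervalIntegral.integral_sub (hgc.intervalIntegrable _ _)
    ((by fun_prop : Continuous fun t => g (t + ℓ)).intervalIntegrable _ _)]
  simpa [abs_of_nonneg hℓ, sq, mul_assoc] using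
    intervalIntegral.norm_integral_le_of_norm_le_const (a := c) (b := c + ℓ) fun t _ => hpt t

section Haar

variable {A B : ℝ}

theorem haarPt_succ (j i : ℕ) : haarPt A B j (i + 1) = haarPt A B j i + (B - A) / 2 ^ j := by
  simp only [haarPt]; push_cast; ring

theorem le_haarPt (hAB : A ≤ B) (j i : ℕ) : A ≤ haarPt A B j i := by
  have : 0 ≤ (i : ℝ) * (B - A) / 2 ^ j := by have := sub_nonneg.mpr hAB; positivity
  simp only [haarPt]; linarith

theorem haarPt_le (hAB : A ≤ B) {j i : ℕ} (hi : i ≤ 2 ^ j) : haarPt A B j i ≤ B := by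
  have hi' : (i : ℝ) ≤ 2 ^ j := by exact_mod_cast hi
  have : (i : ℝ) * (B - A) / 2 ^ j ≤ B - A := by
    rw [div_le_iff₀ (by positivity)]; nlinarith [sub_nonneg.mpr hAB]
  simp only [haarPt]; linarith

theorem haarC0_eq (hAB : A ≤ B) (g : ℝ → ℝ) :
    haarC0 A B g = (Real.sqrt (B - A))⁻¹ * ∫ t in A..B, g t := by
  have hI : haarI A B 0 1 = Set.Ioc A B := by simp [haarI, haarPt]
  simp only [haarC0, haarH0, hI, mul_left_comm (g _), ← Set.indicator_mul_right, Pi.one_apply,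
    mul_one, intervalIntegral.integral_const_mul]
  rw [intervalIntegral_indicator_Ioc le_rfl hAB le_rfl]

theorem haarC_eq (hAB : A ≤ B) {j k : ℕ} (hk : 1 ≤ k) (hkj : k ≤ 2 ^ j) {g : ℝ → ℝ}
    (hg : Continuous g) :
    haarC A B j k g = (Real.sqrt (B - A))⁻¹ * Real.sqrt (2 ^ j) *
      ((∫ t in haarPt A B (j + 1) (2 * k - 2)..haarPt A B (j + 1) (2 * k - 2) +
          (B - A) / 2 ^ (j + 1), g t) -
        ∫ t in haarPt A B (j + 1) (2 * k - 2) + (B - A) / 2 ^ (j + 1)..haarPt A B (j + 1)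
          (2 * k - 2) + 2 * ((B - A) / 2 ^ (j + 1)), g t) := by
  set c := haarPt A B (j + 1) (2 * k - 2)
  set ℓ := (B - A) / 2 ^ (j + 1)
  have hmid : haarPt A B (j + 1) (2 * k - 1) = c + ℓ := by
    rw [show 2 * k - 1 = 2 * k - 2 + 1 by omega, haarPt_succ]
  have hend : haarPt A B (j + 1) (2 * k) = c + 2 * ℓ := by
    rw [show 2 * k = 2 * k - 2 + 1 + 1 by omega, haarPt_succ, haarPt_succ]; ring
  have hI₁ : haarI A B (j + 1) (2 * k - 1) = Set.Ioc c (c + ℓ) := by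
    rw [haarI, hmid, show 2 * k - 1 - 1 = 2 * k - 2 by omega]
  have hI₂ : haarI A B (j + 1) (2 * k) = Set.Ioc (c + ℓ) (c + 2 * ℓ) := by
    rw [haarI, hend, show 2 * k - 1 = 2 * k - 2 + 1 by omega, haarPt_succ]
  have hℓ : 0 ≤ ℓ := by have := sub_nonneg.mpr hAB; positivity
  have hAc : A ≤ c := le_haarPt hAB _ _
  have hendB : c + 2 * ℓ ≤ B := hend ▸ haarPt_le hAB (by rw [pow_succ]; omega)
  have hint (u v : ℝ) : IntervalIntegrable ((Set.Ioc u v).indicator g) volume A B :=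
    (hg.integrableOn_Ioc.integrable_indicator measurableSet_Ioc).intervalIntegrable
  have hintegrand (t : ℝ) : g t * haarH A B j k t = (Real.sqrt (B - A))⁻¹ * Real.sqrt (2 ^ j) *
      ((Set.Ioc c (c + ℓ)).indicator g t - (Set.Ioc (c + ℓ) (c + 2 * ℓ)).indicator g t) := by
    simp only [haarH, hI₁, hI₂, Set.indicator_apply]
    split_ifs <;> simp [mul_comm]
  simp only [haarC, hintegrand, intervalIntegral.integral_const_mul]
  rw [intervalIntegral.integral_sub (hint _ _) (hint _ _),
    intervalIntegral_indicator_Ioc hAc (by linarith) (by linarith),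
    intervalIntegral_indicator_Ioc (by linarith) (by linarith) hendB]

theorem abs_haarC0_le (hAB : A < B) {g : ℝ → ℝ} {M : ℝ} (hM : ∀ x, |g x| ≤ M) :
    |haarC0 A B g| ≤ M * Real.sqrt (B - A) := by
  have hΔ : 0 < B - A := sub_pos.mpr hAB
  have hint : |∫ t in A..B, g t| ≤ M * (B - A) := by
    simpa [abs_of_pos hΔ] using intervalIntegral.norm_integral_le_of_norm_le_const
      (a := A) (b := B) (C := M) fun t _ => (Real.norm_eq_abs _).trans_le (hM t)
  rw [haarC0_eq hAB.le, abs_mul, abs_inv, abs_of_nonneg (Real.sqrt_nonneg _), inv_mul_le_iff₀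
    (Real.sqrt_pos.mpr hΔ), mul_left_comm, Real.mul_self_sqrt hΔ.le]
  linarith

theorem abs_haarC_le (hAB : A ≤ B) {j k : ℕ} (hk : 1 ≤ k) (hkj : k ≤ 2 ^ j) {g : ℝ → ℝ}
    {K : NNReal} {M : ℝ} (hg : LipschitzWith K g) (hM : ∀ x, |g x| ≤ M) :
    |haarC A B j k g| ≤ (Real.sqrt (B - A))⁻¹ * Real.sqrt (2 ^ j) *
      min (2 * M * ((B - A) / 2 ^ (j + 1))) (K * ((B - A) / 2 ^ (j + 1)) ^ 2) := by
  have hℓ : 0 ≤ (B - A) / 2 ^ (j + 1) := by have := sub_nonneg.mpr hAB; positivity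
  rw [haarC_eq hAB hk hkj hg.continuous, abs_mul, abs_of_nonneg (by positivity)]
  gcongr
  exact le_min (abs_integral_sub_integral_adjacent_le_of_abs_le hℓ hM)
    (abs_integral_sub_integral_adjacent_le_of_lipschitz hℓ hg)

theorem haar_level_le (hAB : A ≤ B) {g : ℝ → ℝ} {K : NNReal} {M : ℝ} (hg : LipschitzWith K g)
    (hM : ∀ x, |g x| ≤ M) {q Q : ℝ} (hq : 0 < q) (hq4 : q ^ 4 = 2) (j : ℕ) {δ : ℕ → ℝ}
    (hδ : ∀ k, 1 ≤ k → k ≤ 2 ^ (j + 1) → |δ k| ≤ Q / q ^ j) :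
    Real.sqrt (2 ^ j) * ∑ k ∈ Icc 1 (2 ^ j), |haarC A B j k g| * (|δ (2 * k - 1)| + |δ (2 * k)|)
      ≤ (Real.sqrt (B - A))⁻¹ * (2 * Q) *
        min (M * (B - A) * (q ^ 3) ^ j) (K * (B - A) ^ 2 / 4 * q⁻¹ ^ j) := by
  have hM0 : 0 ≤ M := (abs_nonneg _).trans (hM 0)
  have hQ : 0 ≤ Q / q ^ j := (abs_nonneg _).trans (hδ 1 le_rfl (Nat.one_le_two_pow))
  set ℓ := (B - A) / 2 ^ (j + 1)
  have hterm : ∀ k ∈ Icc 1 (2 ^ j), |haarC A B j k g| * (|δ (2 * k - 1)| + |δ (2 * k)|) ≤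
      (Real.sqrt (B - A))⁻¹ * Real.sqrt (2 ^ j) * min (2 * M * ℓ) (K * ℓ ^ 2) *
        (2 * (Q / q ^ j)) := by
    intro k hk
    obtain ⟨hk1, hkj⟩ := mem_Icc.mp hk
    have hk' : 2 * k ≤ 2 ^ (j + 1) := by rw [pow_succ]; omega
    rw [two_mul (Q / q ^ j)]
    gcongr
    · exact abs_haarC_le hAB hk1 hkj hg hM
    · exact hδ _ (by omega) (by omega)
    · exact hδ _ (by omega) hk'
  have hsum := sum_le_card_nsmul _ _ _ hterm
  rw [Nat.card_Icc, Nat.add_sub_cancel, nsmul_eq_mul] at hsum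
  have h2 : (2 : ℝ) ^ j = (q ^ j) ^ 4 := by rw [← pow_mul, mul_comm, pow_mul, hq4]
  have hsqrt : Real.sqrt (2 ^ j) = (q ^ j) ^ 2 := by
    rw [h2, show (q ^ j) ^ 4 = ((q ^ j) ^ 2) ^ 2 by ring, Real.sqrt_sq (by positivity)]
  calc _ ≤ Real.sqrt (2 ^ j) * (((2 ^ j : ℕ) : ℝ) * ((Real.sqrt (B - A))⁻¹ * Real.sqrt (2 ^ j) *
        min (2 * M * ℓ) (K * ℓ ^ 2) * (2 * (Q / q ^ j)))) := by gcongr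
    _ = (Real.sqrt (B - A))⁻¹ * (2 * Q) * ((q ^ j) ^ 7 * min (2 * M * ℓ) (K * ℓ ^ 2)) := by
      push_cast
      rw [hsqrt, h2]
      field_simp
    _ = _ := by
      have hℓ : ℓ = (B - A) / (2 * (q ^ j) ^ 4) := by rw [← h2, ← pow_succ']
      rw [mul_min_of_nonneg _ _ (by positivity), pow_right_comm q 3 j, inv_pow, hℓ]
      congr 2
      · field_simp
      · field_simp; ring

theorem sum_haar_levels_le (hAB : A < B) {g : ℝ → ℝ} {K : NNReal} {M : ℝ}
    (hg : LipschitzWith K g) (hM : ∀ x, |g x| ≤ M) {q Q : ℝ} (hq : 1 < q) (hq4 : q ^ 4 = 2)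
    (hQ : 0 ≤ Q) (n : ℕ) {D : ℕ → ℕ → ℝ}
    (hD : ∀ j < n, ∀ k, 1 ≤ k → k ≤ 2 ^ (j + 1) → |D (j + 1) k| ≤ Q / q ^ j) :
    (Real.sqrt (B - A))⁻¹ * ∑ j ∈ range n, Real.sqrt (2 ^ j) * ∑ k ∈ Icc 1 (2 ^ j),
        |haarC A B j k g| * (|D (j + 1) (2 * k - 1)| + |D (j + 1) (2 * k)|)
      ≤ 2 * chainingConst q * (B - A) ^ ((3 : ℝ) / 4) *
        (M ^ ((1 : ℝ) / 4) * (K : ℝ) ^ ((3 : ℝ) / 4)) * Q := by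
  have hΔ : 0 < B - A := sub_pos.mpr hAB
  have hM0 : 0 ≤ M := (abs_nonneg _).trans (hM 0)
  set P := M ^ ((1 : ℝ) / 4) * (K : ℝ) ^ ((3 : ℝ) / 4) * ((B - A) * (B - A) ^ ((3 : ℝ) / 4))
  calc _ ≤ (Real.sqrt (B - A))⁻¹ * ∑ j ∈ range n, (Real.sqrt (B - A))⁻¹ * (2 * Q) *
        min (M * (B - A) * (q ^ 3) ^ j) (K * (B - A) ^ 2 / 4 * q⁻¹ ^ j) := by
        gcongr (Real.sqrt (B - A))⁻¹ * ∑ j ∈ range n, ?_ with j hj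
        exact haar_level_le hAB.le hg hM (zero_lt_one.trans hq) hq4 j (hD j (mem_range.mp hj))
    _ ≤ (Real.sqrt (B - A))⁻¹ * ((Real.sqrt (B - A))⁻¹ * (2 * Q) *
        (chainingConst q * P)) := by
        rw [← mul_sum]
        gcongr
        exact sum_min_geom_le (by positivity) (by positivity) (one_lt_pow₀ hq (by norm_num))
          (by positivity) (inv_lt_one_of_one_lt₀ hq)
          (min_growth_decay_le hM0 K.coe_nonneg hΔ.le (zero_lt_one.trans hq)) n
    _ = _ := by
        have hs : (Real.sqrt (B - A))⁻¹ * (Real.sqrt (B - A))⁻¹ * (B - A) = 1 := by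
          rw [← mul_inv, Real.mul_self_sqrt hΔ.le, inv_mul_cancel₀ hΔ.ne']
        simp only [P]
        linear_combination (2 * chainingConst q * (B - A) ^ ((3 : ℝ) / 4) *
          (M ^ ((1 : ℝ) / 4) * (K : ℝ) ^ ((3 : ℝ) / 4)) * Q) * hs

theorem haar_chaining_le (hAB : A < B) {g : ℝ → ℝ} {K : NNReal} {M : ℝ}
    (hg : LipschitzWith K g) (hM : ∀ x, |g x| ≤ M) {q Q : ℝ} (hq : 1 < q) (hq4 : q ^ 4 = 2)
    (n : ℕ) {D : ℕ → ℕ → ℝ} (hD0 : |D 0 1| ≤ Q)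
    (hD : ∀ j < n, ∀ k, 1 ≤ k → k ≤ 2 ^ (j + 1) → |D (j + 1) k| ≤ Q / q ^ j) :
    (Real.sqrt (B - A))⁻¹ * (|haarC0 A B g| * |D 0 1| + ∑ j ∈ range n, Real.sqrt (2 ^ j) *
        ∑ k ∈ Icc 1 (2 ^ j), |haarC A B j k g| * (|D (j + 1) (2 * k - 1)| + |D (j + 1) (2 * k)|))
      ≤ (1 + 2 * chainingConst q * (B - A) ^ ((3 : ℝ) / 4)) *
        (M + M ^ ((1 : ℝ) / 4) * (K : ℝ) ^ ((3 : ℝ) / 4)) * Q := by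
  have hQ : 0 ≤ Q := (abs_nonneg _).trans hD0
  have hM0 : 0 ≤ M := (abs_nonneg _).trans (hM 0)
  have hsqrt : 0 < Real.sqrt (B - A) := Real.sqrt_pos.mpr (sub_pos.mpr hAB)
  have hc0 : (Real.sqrt (B - A))⁻¹ * (|haarC0 A B g| * |D 0 1|) ≤ M * Q := by
    calc _ ≤ (Real.sqrt (B - A))⁻¹ * (M * Real.sqrt (B - A) * Q) := by
          gcongr; exact abs_haarC0_le hAB hM
      _ = M * Q := by field_simp
  have hlevels := sum_haar_levels_le hAB hg hM hq hq4 hQ n hD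
  have hκ := chainingConst_pos hq
  have hMκ : 0 ≤ 2 * chainingConst q * (B - A) ^ ((3 : ℝ) / 4) * M * Q := by positivity
  have hXQ : 0 ≤ M ^ ((1 : ℝ) / 4) * (K : ℝ) ^ ((3 : ℝ) / 4) * Q := by positivity
  rw [mul_add]
  linarith
end Haar

/-- Deterministic multiscale (chaining) bound: if the dyadic block discrepancies
`D_{j,k}` satisfy `|D_{j,k}| ≤ (m 2^{-j})^{1/4} log m`, then the Haar-coefficient
weighted sum is of size `(‖g‖_∞ + ‖g‖_∞^{1/4} ‖g'‖_∞^{3/4}) m^{1/4} log m`,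
with a constant depending only on `B - A` (core estimate of Theorem 5.1 of
Grama–Neumann). -/
theorem multiscale_haar_bound :
    ∃ C : ℝ → ℝ, ∀ A B : ℝ, A < B →
      0 < C (B - A) ∧
      ∀ m : ℕ, 2 ≤ m → ∀ jstar : ℕ, ∀ g : ℝ → ℝ,
        ContDiff ℝ 1 g →
        BddAbove (Set.range fun x => |g x|) →
        BddAbove (Set.range fun x => |deriv g x|) →
        ∀ D : ℕ → ℕ → ℝ,
          (∀ j, j ≤ jstar + 1 → ∀ k, 1 ≤ k → k ≤ 2 ^ j →
            |D j k| ≤ ((m : ℝ) / 2 ^ j) ^ ((1 : ℝ) / 4) * Real.log m) →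
          (Real.sqrt (B - A))⁻¹ *
              (|haarC0 A B g| * |D 0 1| +
                ∑ j ∈ Finset.range (jstar + 1), Real.sqrt (2 ^ j) *
                  ∑ k ∈ Finset.Icc 1 (2 ^ j),
                    |haarC A B j k g| * (|D (j + 1) (2 * k - 1)| + |D (j + 1) (2 * k)|))
            ≤ C (B - A) *
                ((⨆ x, |g x|) + (⨆ x, |g x|) ^ ((1 : ℝ) / 4) *
                  (⨆ x, |deriv g x|) ^ ((3 : ℝ) / 4)) *
                (m : ℝ) ^ ((1 : ℝ) / 4) * Real.log m := by
  set q : ℝ := 2 ^ ((1 : ℝ) / 4)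
  have hq4 : q ^ 4 = 2 := by rw [← Real.rpow_mul_natCast zero_le_two]; norm_num
  have hq : 1 < q := Real.one_lt_rpow one_lt_two (by norm_num)
  have hκ := chainingConst_pos hq
  refine ⟨fun d => 1 + 2 * chainingConst q * d ^ ((3 : ℝ) / 4), fun A B hAB => ⟨by positivity, ?_⟩⟩
  intro m _ jstar g hg hBg hBg' D hD
  have hL0 : 0 ≤ ⨆ x, |deriv g x| := (abs_nonneg _).trans (le_ciSup hBg' 0)
  have hLip : LipschitzWith (⨆ x, |deriv g x|).toNNReal g :=
    lipschitzWith_of_nnnorm_deriv_le (hg.differentiable one_ne_zero) fun x =>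
      (Real.le_toNNReal_iff_coe_le hL0).mpr ((Real.norm_eq_abs _).trans_le (le_ciSup hBg' x))
  have hchain := haar_chaining_le hAB hLip (le_ciSup hBg) hq hq4 (jstar + 1)
    (by simpa only [pow_zero, div_one] using hD 0 (Nat.zero_le _) 1 le_rfl le_rfl)
    fun j hj k hk hkj => (hD (j + 1) (by omega) k hk hkj).trans
      (div_two_pow_succ_rpow_quarter_mul_le (Nat.cast_nonneg m) (Real.log_natCast_nonneg m) j)
  rw [Real.coe_toNNReal _ hL0] at hchain
  exact hchain.trans_eq (mul_assoc _ _ _).symm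
end
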